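/- arXiv:2410.10458 — 7 statements merged into one kernel-verified Lean document; each statement's English description precedes it below -/
import Mathlib

section
/- Under assumption (A1) on the weights and with Ω bounded containing at least one grid point, the first Dirichlet eigenvalue λ_{h,Ω} of −L_h on Ω, characterized as λ_{h,Ω} = min{⟨φ, −L_h φ⟩_{ℓ²(hℤ^N)} : φ ∈ X_h(Ω), ‖φ‖_{ℓ²(hℤ^N)} = 1}, is strictly positive. -/
open Real

/-- The discrete diffusion operator on the grid `hℤᴺ` (identified with `ℤᴺ`),
`L_h φ(x_α) = Σ_{β≠0} (φ(x_α + x_β) - φ(x_α)) ω(β)`. -/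
noncomputable def discreteLh {N : ℕ} (ω : (Fin N → ℤ) → ℝ) (φ : (Fin N → ℤ) → ℝ)
    (α : Fin N → ℤ) : ℝ :=
  ∑' β : Fin N → ℤ, (φ (α + β) - φ α) * ω β

/-!
Expanding the square and translating the summation index shows that, for finitely supported `φ`,
`⟨φ, -L_h φ⟩ = ½ Σ_β ω(β) Σ_α (φ(α) - φ(α + β))²`. Some `β ≠ 0` carries positive weight, and a
nonzero finitely supported function on the torsion-free group `ℤᴺ` cannot be `β`-periodic, so
this sum has a strictly positive term.
-/

open Finset

section FinitelySupported

variable {G : Type*} [AddCommGroup G] {φ : G → ℝ} {S : Finset G}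

theorem Function.Periodic.eq_zero_of_forall_notMem [IsAddTorsionFree G] {β : G}
    (hper : Function.Periodic φ β) (hβ : β ≠ 0) (hφ : ∀ α ∉ S, φ α = 0) (α : G) : φ α = 0 := by
  by_contra hα
  have hmem : ∀ n : ℕ, α + n • β ∈ S := fun n => by
    by_contra hn
    exact hα (hper.nsmul n α ▸ hφ _ hn)
  obtain ⟨m, n, hmn, heq⟩ := S.finite_toSet.exists_lt_map_eq_of_forall_mem hmem
  obtain ⟨k, rfl⟩ := Nat.exists_eq_add_of_lt hmn
  rw [add_assoc m k 1, add_nsmul, ← add_assoc] at heq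
  have hk : (k + 1) • β = (k + 1) • (0 : G) := by rw [smul_zero, left_eq_add.mp heq]
  exact hβ (IsAddTorsionFree.nsmul_right_injective k.succ_ne_zero hk)

theorem hasSum_sq_sub_apply_add (hφ : ∀ α ∉ S, φ α = 0) (β : G) :
    HasSum (fun α => (φ α - φ (α + β)) ^ 2) (2 * ∑ α ∈ S, φ α * (φ α - φ (α + β))) := by
  have hsq : HasSum (fun α => φ α ^ 2) (∑ α ∈ S, φ α ^ 2) :=
    hasSum_sum_of_ne_finset_zero fun α hα => by simp [hφ α hα]
  have hsq_add : HasSum (fun α => φ (α + β) ^ 2) (∑ α ∈ S, φ α ^ 2) :=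
    ((Equiv.addRight β).hasSum_iff (f := fun α => φ α ^ 2)).mpr hsq
  have hprod : HasSum (fun α => φ α * (φ α - φ (α + β))) (∑ α ∈ S, φ α * (φ α - φ (α + β))) :=
    hasSum_sum_of_ne_finset_zero fun α hα => by simp [hφ α hα]
  have h := (hprod.mul_left 2).add (hsq_add.sub hsq)
  rw [sub_self, add_zero] at h
  exact h.congr_fun fun α => by ring

theorem sum_mul_sub_apply_add_nonneg (hφ : ∀ α ∉ S, φ α = 0) (β : G) :
    0 ≤ ∑ α ∈ S, φ α * (φ α - φ (α + β)) := by
  have := (hasSum_sq_sub_apply_add hφ β).nonneg fun α => sq_nonneg _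
  linarith

theorem sum_mul_sub_apply_add_pos [IsAddTorsionFree G] (hφ : ∀ α ∉ S, φ α = 0)
    (hne : ∃ α, φ α ≠ 0) {β : G} (hβ : β ≠ 0) :
    0 < ∑ α ∈ S, φ α * (φ α - φ (α + β)) := by
  obtain ⟨α, hα⟩ : ∃ α, φ (α + β) ≠ φ α := by
    by_contra! hper
    obtain ⟨α, hα⟩ := hne
    exact hα (Function.Periodic.eq_zero_of_forall_notMem hper hβ hφ α)
  have := hasSum_lt (f := 0) (g := fun α => (φ α - φ (α + β)) ^ 2) (i := α)
    (fun α => sq_nonneg _) (pow_two_pos_of_ne_zero (sub_ne_zero.mpr hα.symm)) hasSum_zero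
    (hasSum_sq_sub_apply_add hφ β)
  linarith

end FinitelySupported

section DirichletForm

variable {N : ℕ} {ω φ : (Fin N → ℤ) → ℝ} {S : Finset (Fin N → ℤ)}

theorem hasSum_mul_neg_discreteLh (hsum : Summable ω) (hφ : ∀ α ∉ S, φ α = 0) (α : Fin N → ℤ) :
    HasSum (fun β => φ α * (φ α - φ (α + β)) * ω β) (φ α * -(discreteLh ω φ α)) := by
  have hshift : Summable fun β => φ (α + β) * ω β := by
    refine summable_of_ne_finset_zero (s := S.image (· - α)) fun β hβ => ?_
    rw [hφ (α + β) fun h => hβ (mem_image.mpr ⟨α + β, h, add_sub_cancel_left α β⟩), zero_mul]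
  have hterm : Summable fun β => (φ (α + β) - φ α) * ω β :=
    (hshift.sub (hsum.mul_left (φ α))).congr fun β => by ring
  exact (hterm.hasSum.neg.mul_left (φ α)).congr_fun fun β => by ring

theorem hasSum_sum_mul_neg_discreteLh (hsum : Summable ω) (hφ : ∀ α ∉ S, φ α = 0) :
    HasSum (fun β => (∑ α ∈ S, φ α * (φ α - φ (α + β))) * ω β)
      (∑ α ∈ S, φ α * -(discreteLh ω φ α)) := by
  simp_rw [sum_mul]
  exact hasSum_sum fun α _ => hasSum_mul_neg_discreteLh hsum hφ α

theorem sum_mul_neg_discreteLh_pos (hnonneg : ∀ α, 0 ≤ ω α) (hω0 : ω 0 = 0)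
    (hsum : Summable ω) (hpos : 0 < ∑' α, ω α) (hφ : ∀ α ∉ S, φ α = 0) (hne : ∃ α, φ α ≠ 0) :
    0 < ∑ α ∈ S, φ α * -(discreteLh ω φ α) := by
  obtain ⟨β, hβ⟩ : ∃ β, 0 < ω β := by
    by_contra! h
    exact hpos.not_ge (tsum_nonpos h)
  have hβ0 : β ≠ 0 := by
    rintro rfl
    exact hβ.ne' hω0
  exact hasSum_lt (f := 0) (i := β)
    (fun β => mul_nonneg (sum_mul_sub_apply_add_nonneg hφ β) (hnonneg β))
    (mul_pos (sum_mul_sub_apply_add_pos hφ hne hβ0) hβ) hasSum_zero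
    (hasSum_sum_mul_neg_discreteLh hsum hφ)

end DirichletForm

theorem stmt4_general (N : ℕ) (h : ℝ) (hh : 0 < h) (ω : (Fin N → ℤ) → ℝ)
    (hnonneg : ∀ α, 0 ≤ ω α) (hω0 : ω 0 = 0)
    (hsum : Summable ω) (hpos : 0 < ∑' α, ω α)
    (S : Finset (Fin N → ℤ))
    (lam : ℝ)
    (hlam : IsLeast {r : ℝ | ∃ φ : (Fin N → ℤ) → ℝ,
        (∀ α, α ∉ S → φ α = 0) ∧ h ^ N * ∑ α ∈ S, (φ α) ^ 2 = 1 ∧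
        r = h ^ N * ∑ α ∈ S, φ α * (-(discreteLh ω φ α))} lam) :
    0 < lam := by
  obtain ⟨⟨φ, hφ, hnorm, rfl⟩, -⟩ := hlam
  have hne : ∃ α, φ α ≠ 0 := by
    by_contra! hzero
    simp [hzero] at hnorm
  exact mul_pos (pow_pos hh N) (sum_mul_neg_discreteLh_pos hnonneg hω0 hsum hpos hφ hne)

/-- Under (A1) and with a bounded domain `Ω` containing at least one grid point, the first
Dirichlet eigenvalue of `-L_h` on `Ω`, given by minimizing the Rayleigh quotient over
normalized functions vanishing outside `Ω`, is strictly positive. -/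
theorem stmt4 (N : ℕ) (h : ℝ) (hh : 0 < h) (ω : (Fin N → ℤ) → ℝ)
    (hsym : ∀ α, ω (-α) = ω α) (hnonneg : ∀ α, 0 ≤ ω α) (hω0 : ω 0 = 0)
    (hsum : Summable ω) (hpos : 0 < ∑' α, ω α)
    (Ω : Set (Fin N → ℝ)) (hΩb : Bornology.IsBounded Ω)
    (S : Finset (Fin N → ℤ)) (hSdef : ∀ α, α ∈ S ↔ (fun k => h * α k) ∈ Ω)
    (hS : S.Nonempty)
    (lam : ℝ)
    (hlam : IsLeast {r : ℝ | ∃ φ : (Fin N → ℤ) → ℝ,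
        (∀ α, α ∉ S → φ α = 0) ∧ h ^ N * ∑ α ∈ S, (φ α) ^ 2 = 1 ∧
        r = h ^ N * ∑ α ∈ S, φ α * (-(discreteLh ω φ α))} lam) :
    0 < lam :=
  stmt4_general N h hh ω hnonneg hω0 hsum hpos S lam hlam
end

section
/- Without assumption (A2), the first Dirichlet eigenvalue can fail to be simple: in dimension N = 1 with weights ω(±2) = 1 and ω(α) = 0 otherwise, and Ω = (−2,3) (grid points −1, 0, 1, 2 with h = 1), the associated 4×4 matrix M with diagonal 2 and entries −1 at positions connecting points at distance 2 has eigenvalue 1 with multiplicity 2, with eigenvectors (1,0,1,0) and (0,1,0,1) that are not strictly positive. -/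
open Matrix

/-- The matrix of `-L_h` for the weights `ω(±2) = 1` on `Ω = (-2,3)` with `h = 1`. -/
def exampleM : Matrix (Fin 4) (Fin 4) ℝ :=
  !![2, 0, -1, 0; 0, 2, 0, -1; -1, 0, 2, 0; 0, -1, 0, 2]

lemma exampleM_mulVec_even : exampleM *ᵥ ![1, 0, 1, 0] = ![1, 0, 1, 0] := by
  ext i; fin_cases i <;> simp [exampleM, mulVec, dotProduct, Fin.sum_univ_four] <;> norm_num

lemma exampleM_mulVec_odd : exampleM *ᵥ ![0, 1, 0, 1] = ![0, 1, 0, 1] := by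
  ext i; fin_cases i <;> simp [exampleM, mulVec, dotProduct, Fin.sum_univ_four] <;> norm_num

/- `exampleM` couples only the indices `{0, 2}` and `{1, 3}`, each through the block
`!![2, -1; -1, 2]` with eigenvalues `1` and `3`. -/
lemma eval_charpoly_exampleM (t : ℝ) :
    exampleM.charpoly.eval t = (t - 1) ^ 2 * (t - 3) ^ 2 := by
  have h : scalar (Fin 4) t - exampleM =
      !![t - 2, 0, 1, 0; 0, t - 2, 0, 1; 1, 0, t - 2, 0; 0, 1, 0, t - 2] := by
    ext i j; fin_cases i <;> fin_cases j <;> simp [exampleM]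
  rw [eval_charpoly, h, det_succ_row_zero]
  simp [Fin.sum_univ_succ, det_fin_three, Fin.succAbove]
  ring

lemma mem_spectrum_exampleM_iff (μ : ℝ) : μ ∈ spectrum ℝ exampleM ↔ μ = 1 ∨ μ = 3 := by
  simp [mem_spectrum_iff_isRoot_charpoly, eval_charpoly_exampleM, sub_eq_zero]

/-- Without assumption (A2) the first eigenvalue need not be simple: for the matrix above,
`(1,0,1,0)` and `(0,1,0,1)` are linearly independent eigenvectors for the eigenvalue `1`,
neither of which is strictly positive, and `1` is the smallest eigenvalue of `M`. -/
theorem stmt6 :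
    exampleM.mulVec ![1, 0, 1, 0] = ![1, 0, 1, 0] ∧
    exampleM.mulVec ![0, 1, 0, 1] = ![0, 1, 0, 1] ∧
    LinearIndependent ℝ ![(![1, 0, 1, 0] : Fin 4 → ℝ), ![0, 1, 0, 1]] ∧
    (¬ ∀ i, 0 < (![1, 0, 1, 0] : Fin 4 → ℝ) i) ∧
    (¬ ∀ i, 0 < (![0, 1, 0, 1] : Fin 4 → ℝ) i) ∧
    (1 : ℝ) ∈ spectrum ℝ exampleM ∧
    (3 : ℝ) ∈ spectrum ℝ exampleM ∧
    (∀ μ ∈ spectrum ℝ exampleM, (1 : ℝ) ≤ μ) := by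
  refine ⟨exampleM_mulVec_even, exampleM_mulVec_odd, ?_, fun h ↦ by simpa using h 1,
    fun h ↦ by simpa using h 0, (mem_spectrum_exampleM_iff 1).2 (.inl rfl),
    (mem_spectrum_exampleM_iff 3).2 (.inr rfl), ?_⟩
  · rw [LinearIndependent.pair_iff]
    intro s t h
    exact ⟨by simpa using congrFun h 0, by simpa using congrFun h 1⟩
  · intro μ hμ
    rcases (mem_spectrum_exampleM_iff μ).1 hμ with rfl | rfl <;> norm_num
end

section
/- Assume the weights ω(·,h) satisfy (A1) and have finite second moment M_2(h) = Σ_α ω(α,h)|x_α|² < ∞. For a bounded domain Ω and R > 0 let Ω_R = RΩ. Then for all R large enough, the first Dirichlet eigenvalue satisfies λ_{h,Ω_R} ≤ C M_2(h) R^{−2}, with C independent of h and R. -/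
/-!
Test the Rayleigh quotient with the tent `φ α = (ρ - ‖h α - R x₀‖)⁺`, where the sup-norm ball
`B(x₀, r)` lies in `Ω` and `ρ = R r`. Let `Q_t` be the set of lattice points `α` with
`‖h α - R x₀‖ ≤ t`. Being `1`-Lipschitz, `φ` lets each pair contribute at most
`ω (α - β) |h (α - β)|²` to the Dirichlet form, and every contributing pair has an endpoint in
`Q_ρ`, so the form is at most `2 #Q_ρ · M₂(h)`. On `Q_{ρ/2}` we have `φ ≥ ρ / 2`, and once
`ρ ≥ 2 h` also `#Q_ρ ≤ 5ᴺ #Q_{ρ/2}`, so `‖φ‖² ≥ 5⁻ᴺ #Q_ρ ρ² / 4`. Hence the quotient is at most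
`4 · 5ᴺ M₂(h) / (r R)²`.
-/

open Real Set Pointwise

noncomputable section

section Tent

variable {E : Type*} [SeminormedAddCommGroup E]

def tent (c : E) (ρ : ℝ) (x : E) : ℝ := max (ρ - ‖x - c‖) 0

lemma abs_tent_sub_tent_le (c : E) (ρ : ℝ) (x y : E) :
    |tent c ρ x - tent c ρ y| ≤ ‖x - y‖ :=
  calc |tent c ρ x - tent c ρ y| ≤ |(ρ - ‖x - c‖) - (ρ - ‖y - c‖)| :=
        abs_max_sub_max_le_abs _ _ _
    _ = |‖y - c‖ - ‖x - c‖| := by ring_nf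
    _ ≤ ‖(y - c) - (x - c)‖ := abs_norm_sub_norm_le _ _
    _ = ‖x - y‖ := by rw [sub_sub_sub_cancel_right, norm_sub_rev]

lemma mem_ball_of_tent_ne_zero {c x : E} {ρ : ℝ} (hx : tent c ρ x ≠ 0) :
    x ∈ Metric.ball c ρ := by
  rw [Metric.mem_ball, dist_eq_norm]
  by_contra hle
  exact hx (max_eq_right (by linarith [not_lt.1 hle]))

lemma half_le_tent {c x : E} {ρ : ℝ} (hx : ‖x - c‖ ≤ ρ / 2) : ρ / 2 ≤ tent c ρ x :=
  le_max_of_le_left (by linarith)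

end Tent

lemma sq_norm_le_sum_sq {ι : Type*} [Fintype ι] (v : ι → ℝ) : ‖v‖ ^ 2 ≤ ∑ i, v i ^ 2 := by
  have hsum : 0 ≤ ∑ i, v i ^ 2 := Finset.sum_nonneg fun i _ => sq_nonneg (v i)
  refine (Real.le_sqrt (norm_nonneg v) hsum).1 ((pi_norm_le_iff_of_nonneg (Real.sqrt_nonneg _)).2
    fun i => Real.abs_le_sqrt ?_)
  exact Finset.single_le_sum (fun j _ => sq_nonneg (v j)) (Finset.mem_univ i)

lemma sq_tent_sub_tent_le {ι : Type*} [Fintype ι] (c : ι → ℝ) (ρ : ℝ) (x y : ι → ℝ) :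
    (tent c ρ x - tent c ρ y) ^ 2 ≤ ∑ i, (x i - y i) ^ 2 :=
  calc (tent c ρ x - tent c ρ y) ^ 2 = |tent c ρ x - tent c ρ y| ^ 2 := (sq_abs _).symm
    _ ≤ ‖x - y‖ ^ 2 := pow_le_pow_left₀ (abs_nonneg _) (abs_tent_sub_tent_le c ρ x y) 2
    _ ≤ ∑ i, (x i - y i) ^ 2 := sq_norm_le_sum_sq (x - y)

lemma card_Icc_ceil_floor_le {p q : ℝ} (hpq : p ≤ q) :
    ((Finset.Icc ⌈p⌉ ⌊q⌋).card : ℝ) ≤ q - p + 1 := by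
  have hcard : ((Finset.Icc ⌈p⌉ ⌊q⌋).card : ℝ) = max ((⌊q⌋ : ℝ) + 1 - ⌈p⌉) 0 := by
    exact_mod_cast (Int.card_Icc ⌈p⌉ ⌊q⌋ ▸ Int.toNat_eq_max (⌊q⌋ + 1 - ⌈p⌉))
  rw [hcard]
  exact max_le (by linarith [Int.floor_le q, Int.le_ceil p]) (by linarith)

lemma sub_one_le_card_Icc_ceil_floor (p q : ℝ) :
    q - p - 1 ≤ ((Finset.Icc ⌈p⌉ ⌊q⌋).card : ℝ) := by
  have hcard : ((⌊q⌋ : ℝ) + 1 - ⌈p⌉) ≤ (Finset.Icc ⌈p⌉ ⌊q⌋).card := by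
    exact_mod_cast (Int.card_Icc ⌈p⌉ ⌊q⌋ ▸ Int.self_le_toNat (⌊q⌋ + 1 - ⌈p⌉))
  linarith [Int.lt_floor_add_one q, Int.ceil_lt_add_one p]

section Lattice

variable {N : ℕ}

def latticePt (h : ℝ) (α : Fin N → ℤ) : Fin N → ℝ := fun k => h * α k

def latticeBox (h : ℝ) (c : Fin N → ℝ) (ρ : ℝ) : Finset (Fin N → ℤ) :=
  Finset.Icc (fun i => ⌈(c i - ρ) / h⌉) (fun i => ⌊(c i + ρ) / h⌋)

variable {h ρ : ℝ} {c : Fin N → ℝ}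

lemma mem_latticeBox (hh : 0 < h) {α : Fin N → ℤ} :
    α ∈ latticeBox h c ρ ↔ ∀ i, |h * α i - c i| ≤ ρ := by
  simp only [latticeBox, Finset.mem_Icc, Pi.le_def, Int.ceil_le, Int.le_floor, div_le_iff₀ hh,
    le_div_iff₀ hh, abs_le, ← forall_and]
  refine forall_congr' fun i => ?_
  constructor <;> rintro ⟨h1, h2⟩ <;> constructor <;> linarith

lemma card_latticeBox (h : ℝ) (c : Fin N → ℝ) (ρ : ℝ) :
    ((latticeBox h c ρ).card : ℝ) =
      ∏ i, ((Finset.Icc ⌈(c i - ρ) / h⌉ ⌊(c i + ρ) / h⌋).card : ℝ) := by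
  rw [latticeBox, Pi.card_Icc, Nat.cast_prod]

lemma card_latticeBox_pos (hh : 0 < h) (hρ : h < 2 * ρ) : 0 < ((latticeBox h c ρ).card : ℝ) := by
  rw [card_latticeBox]
  refine Finset.prod_pos fun i _ => ?_
  have hlen : (c i + ρ) / h - (c i - ρ) / h = 2 * ρ / h := by ring
  have hgt : 1 < 2 * ρ / h := by rwa [one_lt_div hh]
  linarith [sub_one_le_card_Icc_ceil_floor ((c i - ρ) / h) ((c i + ρ) / h)]

lemma card_latticeBox_le_five_pow_mul (hh : 0 < h) (hρ : 2 * h ≤ ρ) :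
    ((latticeBox h c ρ).card : ℝ) ≤ 5 ^ N * (latticeBox h c (ρ / 2)).card := by
  have hL : 2 ≤ ρ / h := by rwa [le_div_iff₀ hh]
  rw [card_latticeBox, card_latticeBox, ← Fin.prod_const, ← Finset.prod_mul_distrib]
  refine Finset.prod_le_prod (fun i _ => Nat.cast_nonneg _) fun i _ => ?_
  have houter := card_Icc_ceil_floor_le (p := (c i - ρ) / h) (q := (c i + ρ) / h)
    (by gcongr; linarith)
  have hinner := sub_one_le_card_Icc_ceil_floor ((c i - ρ / 2) / h) ((c i + ρ / 2) / h)
  have hlen : (c i + ρ) / h - (c i - ρ) / h = 2 * (ρ / h) := by ring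
  have hlen' : (c i + ρ / 2) / h - (c i - ρ / 2) / h = ρ / h := by ring
  linarith

lemma tent_latticePt_eq_zero (hh : 0 < h) {α : Fin N → ℤ} (hα : α ∉ latticeBox h c ρ) :
    tent c ρ (latticePt h α) = 0 := by
  by_contra hne
  refine hα ((mem_latticeBox hh).2 fun i => ?_)
  have hball := mem_ball_of_tent_ne_zero hne
  rw [Metric.mem_ball, dist_eq_norm] at hball
  exact (norm_le_pi_norm (latticePt h α - c) i).trans hball.le

lemma card_latticeBox_mul_sq_le_tsum_sq_tent (hh : 0 < h) (hρ : 0 ≤ ρ) :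
    ((latticeBox h c (ρ / 2)).card : ℝ) * (ρ / 2) ^ 2 ≤
      ∑' α, tent c ρ (latticePt h α) ^ 2 := by
  have hsum : Summable fun α => tent c ρ (latticePt h α) ^ 2 :=
    summable_of_ne_finset_zero (s := latticeBox h c ρ) fun α hα => by
      rw [tent_latticePt_eq_zero hh hα, sq, mul_zero]
  rw [← nsmul_eq_mul, ← Finset.sum_const]
  refine (Finset.sum_le_sum fun α hα => ?_).trans
    (hsum.sum_le_tsum _ fun α _ => sq_nonneg _)
  have hnorm : ‖latticePt h α - c‖ ≤ ρ / 2 :=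
    (pi_norm_le_iff_of_nonneg (by linarith)).2 ((mem_latticeBox hh).1 hα)
  exact pow_le_pow_left₀ (by linarith) (half_le_tent hnorm) 2

end Lattice

section Dirichlet

variable {G : Type*} [AddCommGroup G]

def dirichletForm (ω φ : G → ℝ) : ℝ := ∑' a, ∑' b, (φ a - φ b) ^ 2 * ω (a - b)

lemma dirichletForm_smul (ω φ : G → ℝ) (t : ℝ) :
    dirichletForm ω (t • φ) = t ^ 2 * dirichletForm ω φ := by
  simp only [dirichletForm, Pi.smul_apply, smul_eq_mul, ← mul_sub, mul_pow, mul_assoc,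
    tsum_mul_left]

variable {ω φ W : G → ℝ} {s : Finset G}

lemma tsum_sq_sub_mul_le (hω : ∀ g, 0 ≤ ω g) (hφ : ∀ a ∉ s, φ a = 0) (hW : Summable W)
    (hφW : ∀ a b, (φ a - φ b) ^ 2 * ω (a - b) ≤ W (a - b)) (a : G) :
    ∑' b, (φ a - φ b) ^ 2 * ω (a - b) ≤
      (s : Set G).indicator (fun _ => ∑' g, W g) a + ∑ b ∈ s, W (a - b) := by
  by_cases ha : a ∈ s
  · have hW₀ g : 0 ≤ W g := by simpa using (mul_nonneg (sq_nonneg _) (hω _)).trans (hφW g 0)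
    have hWa : Summable fun b => W (a - b) := (Equiv.subLeft a).summable_iff.2 hW
    have hle : ∑' b, (φ a - φ b) ^ 2 * ω (a - b) ≤ ∑' b, W (a - b) :=
      (Summable.of_nonneg_of_le (fun b => mul_nonneg (sq_nonneg _) (hω _)) (hφW a) hWa
        |>.tsum_le_tsum (hφW a) hWa)
    have hM : ∑' b, W (a - b) = ∑' g, W g := (Equiv.subLeft a).tsum_eq W
    rw [Set.indicator_of_mem (Finset.mem_coe.2 ha)]
    linarith [Finset.sum_nonneg fun b (_ : b ∈ s) => hW₀ (a - b)]
  · rw [Set.indicator_of_notMem (mt Finset.mem_coe.1 ha), zero_add,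
      tsum_eq_sum fun b hb => by rw [hφ a ha, hφ b hb, sub_zero, sq, zero_mul, zero_mul]]
    exact Finset.sum_le_sum fun b _ => hφW a b

lemma dirichletForm_le_two_mul_card_mul_tsum (hω : ∀ g, 0 ≤ ω g) (hφ : ∀ a ∉ s, φ a = 0)
    (hW : Summable W) (hφW : ∀ a b, (φ a - φ b) ^ 2 * ω (a - b) ≤ W (a - b)) :
    dirichletForm ω φ ≤ 2 * s.card * ∑' g, W g := by
  have hWb b : Summable fun a => W (a - b) := (Equiv.subRight b).summable_iff.2 hW
  have hWb' b : ∑' a, W (a - b) = ∑' g, W g := (Equiv.subRight b).tsum_eq W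
  have hind : Summable fun a => (s : Set G).indicator (fun _ => ∑' g, W g) a :=
    summable_of_ne_finset_zero fun a ha => Set.indicator_of_notMem (mt Finset.mem_coe.1 ha) _
  have hsum : Summable fun a => ∑ b ∈ s, W (a - b) := summable_sum fun b _ => hWb b
  have hbound := hind.add hsum
  have hinner := tsum_sq_sub_mul_le hω hφ hW hφW
  calc dirichletForm ω φ
      ≤ ∑' a, ((s : Set G).indicator (fun _ => ∑' g, W g) a + ∑ b ∈ s, W (a - b)) :=
        (Summable.of_nonneg_of_le (fun a => tsum_nonneg fun b => mul_nonneg (sq_nonneg _) (hω _))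
          hinner hbound).tsum_le_tsum hinner hbound
    _ = s.card * ∑' g, W g + s.card * ∑' g, W g := by
        rw [hind.tsum_add hsum,
          tsum_eq_sum fun a ha => Set.indicator_of_notMem (mt Finset.mem_coe.1 ha) _,
          Summable.tsum_finsetSum fun b _ => hWb b,
          Finset.sum_congr rfl fun a ha => Set.indicator_of_mem (Finset.mem_coe.2 ha) _,
          Finset.sum_congr rfl fun b _ => hWb' b]
        simp only [Finset.sum_const, nsmul_eq_mul]
    _ = 2 * s.card * ∑' g, W g := by ring

end Dirichlet

section Rayleigh

variable {N : ℕ} {h ρ : ℝ} {c : Fin N → ℝ} {ω : (Fin N → ℤ) → ℝ}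

lemma dirichletForm_tent_le (hh : 0 < h) (hω : ∀ α, 0 ≤ ω α)
    (hM₂ : Summable fun α : Fin N → ℤ => ω α * ∑ i, (h * α i) ^ 2) :
    dirichletForm ω (fun α => tent c ρ (latticePt h α)) ≤
      2 * (latticeBox h c ρ).card * ∑' α : Fin N → ℤ, ω α * ∑ i, (h * α i) ^ 2 := by
  refine dirichletForm_le_two_mul_card_mul_tsum hω (fun α => tent_latticePt_eq_zero hh) hM₂
    fun α β => ?_
  rw [mul_comm]
  refine mul_le_mul_of_nonneg_left ((sq_tent_sub_tent_le _ _ _ _).trans_eq ?_) (hω _)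
  simp only [latticePt, Pi.sub_apply, Int.cast_sub]
  ring_nf

def rayleighQuotients (h : ℝ) (ω : (Fin N → ℤ) → ℝ) (U : Set (Fin N → ℝ)) : Set ℝ :=
  {r | ∃ φ : (Fin N → ℤ) → ℝ, (Function.support φ).Finite ∧
    (∀ α, latticePt h α ∉ U → φ α = 0) ∧ h ^ N * ∑' α, φ α ^ 2 = 1 ∧
    r = h ^ N / 2 * dirichletForm ω φ}

lemma dirichletForm_div_mem_rayleighQuotients (hh : 0 < h) {U : Set (Fin N → ℝ)}
    {φ : (Fin N → ℤ) → ℝ} (hfin : (Function.support φ).Finite)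
    (hU : ∀ α, latticePt h α ∉ U → φ α = 0) (hφ : 0 < ∑' α, φ α ^ 2) :
    dirichletForm ω φ / (2 * ∑' α, φ α ^ 2) ∈ rayleighQuotients h ω U := by
  have hsq : (√(h ^ N * ∑' α, φ α ^ 2))⁻¹ ^ 2 = (h ^ N * ∑' α, φ α ^ 2)⁻¹ := by
    rw [inv_pow, Real.sq_sqrt (by positivity)]
  refine ⟨(√(h ^ N * ∑' α, φ α ^ 2))⁻¹ • φ, hfin.subset (Function.support_const_smul_subset _ _),
    fun α hα => ?_, ?_, ?_⟩
  · simp [hU α hα]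
  · simp only [Pi.smul_apply, smul_eq_mul, mul_pow, tsum_mul_left, hsq]
    field_simp
  · rw [dirichletForm_smul, hsq]
    field_simp

lemma dirichletForm_tent_div_le (hh : 0 < h) (hρ : 2 * h ≤ ρ) (hω : ∀ α, 0 ≤ ω α)
    (hM₂ : Summable fun α : Fin N → ℤ => ω α * ∑ i, (h * α i) ^ 2) :
    dirichletForm ω (fun α => tent c ρ (latticePt h α)) /
        (2 * ∑' α, tent c ρ (latticePt h α) ^ 2) ≤
      4 * 5 ^ N * (∑' α : Fin N → ℤ, ω α * ∑ i, (h * α i) ^ 2) / ρ ^ 2 := by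
  set M₂ := ∑' α : Fin N → ℤ, ω α * ∑ i, (h * α i) ^ 2
  set I : ℝ := ((latticeBox h c (ρ / 2)).card : ℝ)
  have hρ₀ : 0 < ρ := by linarith
  have hM₂₀ : 0 ≤ M₂ := tsum_nonneg fun α => mul_nonneg (hω α) (by positivity)
  have hI : 0 < I := card_latticeBox_pos hh (by linarith)
  have hmass : I * (ρ / 2) ^ 2 ≤ ∑' α, tent c ρ (latticePt h α) ^ 2 :=
    card_latticeBox_mul_sq_le_tsum_sq_tent hh hρ₀.le
  have hform : dirichletForm ω (fun α => tent c ρ (latticePt h α)) ≤ 2 * (5 ^ N * I) * M₂ :=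
    (dirichletForm_tent_le hh hω hM₂).trans
      (by gcongr; exact card_latticeBox_le_five_pow_mul hh hρ)
  calc _ ≤ 2 * (5 ^ N * I) * M₂ / (2 * (I * (ρ / 2) ^ 2)) :=
        div_le_div₀ (by positivity) hform (by positivity) (by linarith)
    _ = 4 * 5 ^ N * M₂ / ρ ^ 2 := by
        field_simp
        ring

end Rayleigh

end

theorem stmt7_general (N : ℕ) (Ω : Set (Fin N → ℝ))
    (hΩo : IsOpen Ω) (hΩne : Ω.Nonempty) :
    ∃ C > (0 : ℝ), ∀ h : ℝ, 0 < h → ∀ ω : (Fin N → ℤ) → ℝ,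
      (∀ α, ω (-α) = ω α) → (∀ α, 0 ≤ ω α) → ω 0 = 0 →
      Summable ω → 0 < ∑' α, ω α →
      Summable (fun α : Fin N → ℤ => ω α * ∑ i, (h * α i) ^ 2) →
      ∀ lam : ℝ → ℝ,
      (∀ R : ℝ, 0 < R →
        IsLeast {r : ℝ | ∃ φ : (Fin N → ℤ) → ℝ, (Function.support φ).Finite ∧
          (∀ α : Fin N → ℤ, (fun k => h * α k) ∉ R • Ω → φ α = 0) ∧
          h ^ N * ∑' α : Fin N → ℤ, (φ α) ^ 2 = 1 ∧
          r = h ^ N / 2 *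
              ∑' α : Fin N → ℤ, ∑' β : Fin N → ℤ, (φ α - φ β) ^ 2 * ω (α - β)} (lam R)) →
      ∃ R0 : ℝ, ∀ R : ℝ, R0 ≤ R →
        lam R ≤ C * (∑' α : Fin N → ℤ, ω α * ∑ i, (h * α i) ^ 2) / R ^ 2 := by
  obtain ⟨x₀, hx₀⟩ := hΩne
  obtain ⟨r, hr, hball⟩ := Metric.isOpen_iff.mp hΩo x₀ hx₀
  refine ⟨4 * 5 ^ N / r ^ 2, by positivity,
    fun h hh ω _ hω _ _ _ hM₂ lam hlam => ⟨2 * h / r, fun R hR => ?_⟩⟩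
  have hρ : 2 * h ≤ R * r := (div_le_iff₀ hr).1 hR
  have hR : 0 < R := (div_pos (by positivity) hr).trans_le hR
  set φ := fun α => tent (R • x₀) (R * r) (latticePt h α)
  have hφU α (hα : latticePt h α ∉ R • Ω) : φ α = 0 := by
    by_contra hne
    refine hα (smul_set_mono hball ?_)
    rw [smul_ball hR.ne', Real.norm_of_nonneg hR.le]
    exact mem_ball_of_tent_ne_zero hne
  have hmass : 0 < ∑' α, φ α ^ 2 :=
    (mul_pos (card_latticeBox_pos hh (by linarith)) (by positivity)).trans_le
      (card_latticeBox_mul_sq_le_tsum_sq_tent hh (by positivity))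
  have hfin : (Function.support φ).Finite :=
    (latticeBox h (R • x₀) (R * r)).finite_toSet.subset
      fun α hα => by_contra fun hout => hα (tent_latticePt_eq_zero hh hout)
  calc lam R ≤ _ :=
        (hlam R hR).2 (dirichletForm_div_mem_rayleighQuotients (ω := ω) hh hfin hφU hmass)
    _ ≤ 4 * 5 ^ N * (∑' α : Fin N → ℤ, ω α * ∑ i, (h * α i) ^ 2) / (R * r) ^ 2 :=
        dirichletForm_tent_div_le hh hρ hω hM₂
    _ = _ := by field_simp

/-- If the weights satisfy (A1) and have finite second moment `M₂(h)`, then the first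
Dirichlet eigenvalue of `-L_h` on the dilated domain `Ω_R = R·Ω` satisfies
`λ_{h,Ω_R} ≤ C M₂(h) R⁻²` for all `R` large enough, with `C` independent of `h` and `R`. -/
theorem stmt7 (N : ℕ) (hN : 0 < N) (Ω : Set (Fin N → ℝ))
    (hΩo : IsOpen Ω) (hΩne : Ω.Nonempty) (hΩb : Bornology.IsBounded Ω) :
    ∃ C > (0 : ℝ), ∀ h : ℝ, 0 < h → ∀ ω : (Fin N → ℤ) → ℝ,
      (∀ α, ω (-α) = ω α) → (∀ α, 0 ≤ ω α) → ω 0 = 0 →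
      Summable ω → 0 < ∑' α, ω α →
      Summable (fun α : Fin N → ℤ => ω α * ∑ i, (h * α i) ^ 2) →
      ∀ lam : ℝ → ℝ,
      (∀ R : ℝ, 0 < R →
        IsLeast {r : ℝ | ∃ φ : (Fin N → ℤ) → ℝ, (Function.support φ).Finite ∧
          (∀ α : Fin N → ℤ, (fun k => h * α k) ∉ R • Ω → φ α = 0) ∧
          h ^ N * ∑' α : Fin N → ℤ, (φ α) ^ 2 = 1 ∧
          r = h ^ N / 2 *
              ∑' α : Fin N → ℤ, ∑' β : Fin N → ℤ, (φ α - φ β) ^ 2 * ω (α - β)} (lam R)) →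
      ∃ R0 : ℝ, ∀ R : ℝ, R0 ≤ R →
        lam R ≤ C * (∑' α : Fin N → ℤ, ω α * ∑ i, (h * α i) ^ 2) / R ^ 2 :=
  stmt7_general N Ω hΩo hΩne
end

section
/- Assume (A1) and the adaptive time-stepping τ_j = τ min{1, ‖u(·,t_j)‖_∞^{1−p}} with τ ≤ 1/(4 Σ ω). Let u ≥ 0 solve the explicit scheme u(x_α,t_{j+1}) = u(x_α,t_j) + τ_j L_h u(x_α,t_j) + τ_j u^p(x_α,t_j). If at some time t_n one has ‖u(·,t_n)‖_∞^{p−1} > Σ_{β≠0} ω(β,h), then for all j ≥ n: ‖u(·,t_{j+1})‖_∞ ≥ ‖u(·,t_j)‖_∞ + τ_j ‖u(·,t_j)‖_∞ (‖u(·,t_j)‖_∞^{p−1} − Σ_{β≠0} ω(β,h)) > ‖u(·,t_j)‖_∞, and ‖u(·,t_j)‖_∞ → ∞ as j → ∞. -/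
open Real Filter

/-- If a nonnegative solution of the explicit scheme `∂_{τⱼ} u = L_h u + uᵖ` with adaptive
steps `τⱼ = τ min{1, ‖u(·,tⱼ)‖_∞^{1-p}}` satisfies `‖u(·,tₙ)‖_∞^{p-1} > Σ ω` at some time
`tₙ`, then its sup-norm strictly increases from `tₙ` on, with the stated quantitative lower
bound, and tends to infinity. -/
theorem stmt11 (N : ℕ) (p τ : ℝ) (hp : 1 < p) (hτ : 0 < τ)
    (ω : (Fin N → ℤ) → ℝ)
    (hsym : ∀ α, ω (-α) = ω α) (hnonneg : ∀ α, 0 ≤ ω α) (hω0 : ω 0 = 0)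
    (hsum : Summable ω) (hpos : 0 < ∑' α, ω α)
    (hCFL : τ ≤ 1 / (4 * ∑' α, ω α))
    (u : ℕ → (Fin N → ℤ) → ℝ) (hu : ∀ j α, 0 ≤ u j α)
    (hbdd : ∀ j, BddAbove (Set.range (u j)))
    (Un : ℕ → ℝ) (hUn : ∀ j, Un j = ⨆ α, u j α)
    (τs : ℕ → ℝ) (hτs : ∀ j, τs j = τ * min 1 (Un j ^ (1 - p)))
    (hscheme : ∀ j α, u (j + 1) α = u j α + τs j * (discreteLh ω (u j) α + u j α ^ p))
    (n : ℕ) (hn : (∑' α, ω α) < Un n ^ (p - 1)) :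
    (∀ j, n ≤ j →
      Un j + τs j * Un j * (Un j ^ (p - 1) - ∑' α, ω α) ≤ Un (j + 1) ∧
      Un j < Un (j + 1)) ∧
    Tendsto Un atTop atTop := by
  set W : ℝ := ∑' α, ω α with hWdef
  have hp1 : (0:ℝ) < p - 1 := by linarith
  have hUnn : ∀ j, 0 ≤ Un j := by
    intro j; rw [hUn]; exact Real.iSup_nonneg (hu j)
  have hble : ∀ j α, u j α ≤ Un j := by
    intro j α; rw [hUn]; exact le_ciSup (hbdd j) α
  -- positivity of Un n
  have hM0 : 0 < Un n := by
    rcases lt_or_eq_of_le (hUnn n) with h | h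
    · exact h
    · exfalso
      rw [← h, Real.zero_rpow (by linarith : p - 1 ≠ 0)] at hn
      exact absurd (hn.trans hpos) (lt_irrefl W)
  -- τs facts
  have hτsnn : ∀ j, 0 ≤ τs j := by
    intro j; rw [hτs]
    exact mul_nonneg hτ.le (le_min zero_le_one (Real.rpow_nonneg (hUnn j) _))
  have hτsle : ∀ j, τs j ≤ τ := by
    intro j; rw [hτs]
    calc τ * min 1 (Un j ^ (1 - p)) ≤ τ * 1 :=
          mul_le_mul_of_nonneg_left (min_le_left _ _) hτ.le
      _ = τ := mul_one τ
  have hτW : τ * W ≤ 1/4 := by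
    rw [le_div_iff₀ (by positivity)] at hCFL
    nlinarith
  have hτsW : ∀ j, τs j * W ≤ 1/4 := by
    intro j
    calc τs j * W ≤ τ * W := mul_le_mul_of_nonneg_right (hτsle j) hpos.le
      _ ≤ 1/4 := hτW
  -- single-step estimate
  have hstep : ∀ j, 0 < Un j →
      Un j + τs j * Un j * (Un j ^ (p - 1) - W) ≤ Un (j + 1) := by
    intro j hUj
    -- lower bound for the operator
    have hL : ∀ α, -(u j α * W) ≤ discreteLh ω (u j) α := by
      intro α
      have hsum1 : Summable (fun β => u j (α + β) * ω β) := by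
        apply Summable.of_nonneg_of_le
          (fun β => mul_nonneg (hu j _) (hnonneg β))
          (fun β => mul_le_mul_of_nonneg_right (hble j (α + β)) (hnonneg β))
          (hsum.mul_left (Un j))
      have hsum2 : Summable (fun β => (u j (α + β) - u j α) * ω β) := by
        have := hsum1.sub (hsum.mul_left (u j α))
        simpa [sub_mul] using this
      have hpt : ∀ β, (-(u j α)) * ω β ≤ (u j (α + β) - u j α) * ω β := by
        intro β
        apply mul_le_mul_of_nonneg_right _ (hnonneg β)
        have := hu j (α + β); linarith
      have := Summable.tsum_le_tsum hpt ((hsum.mul_left (-(u j α)))) hsum2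
      rw [tsum_mul_left] at this
      calc -(u j α * W) = (-(u j α)) * W := by ring
        _ ≤ _ := this
    -- pointwise estimate for the scheme
    have hptw : ∀ α, (1 - τs j * W) * u j α + τs j * u j α ^ p ≤ u (j + 1) α := by
      intro α
      rw [hscheme]
      have h1 : 0 ≤ τs j * (discreteLh ω (u j) α + u j α * W) := by
        apply mul_nonneg (hτsnn j)
        have := hL α; linarith
      nlinarith [h1]
    -- the monotone comparison function
    set F : ℝ → ℝ := fun x => (1 - τs j * W) * max x 0 + τs j * max x 0 ^ p with hFdef
    have hcoef : 0 ≤ 1 - τs j * W := by have := hτsW j; linarith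
    have hFmono : Monotone F := by
      intro a b hab
      have h1 : max a 0 ≤ max b 0 := max_le_max hab le_rfl
      apply add_le_add
      · exact mul_le_mul_of_nonneg_left h1 hcoef
      · exact mul_le_mul_of_nonneg_left
          (Real.rpow_le_rpow (le_max_right a 0) h1 (by linarith)) (hτsnn j)
    have hc1 : Continuous fun x : ℝ => max x 0 := continuous_id.max continuous_const
    have hFc : ContinuousAt F (Un j) := by
      have hc3 : ContinuousAt (fun x : ℝ => max x 0 ^ p) (Un j) :=
        hc1.continuousAt.rpow_const (Or.inr (by linarith))
      exact (continuousAt_const.mul hc1.continuousAt).add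
        (continuousAt_const.mul hc3)
    have hkey : F (Un j) ≤ Un (j + 1) := by
      have heq : F (⨆ α, u j α) = ⨆ α, F (u j α) :=
        hFmono.map_ciSup_of_continuousAt (by rwa [← hUn j]) (hbdd j)
      rw [hUn j, heq, hUn (j + 1)]
      apply ciSup_mono (hbdd (j + 1))
      intro α
      have := hptw α
      simpa [hFdef, max_eq_left (hu j α)] using this
    have hFval : F (Un j) = Un j + τs j * Un j * (Un j ^ (p - 1) - W) := by
      have hmax : max (Un j) 0 = Un j := max_eq_left (hUnn j)
      have hUp : Un j ^ p = Un j * Un j ^ (p - 1) := by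
        have : Un j ^ p = Un j ^ (1 + (p - 1)) := by ring_nf
        rw [this, Real.rpow_add hUj, Real.rpow_one]
      rw [hFdef]; simp only [hmax, hUp]; ring
    linarith [hkey, hFval.ge, hFval.le]
  -- positivity of the increment
  have hinc : ∀ j, Un n ≤ Un j → 0 < τs j * Un j * (Un j ^ (p - 1) - W) := by
    intro j hj
    have hUj : 0 < Un j := lt_of_lt_of_le hM0 hj
    have hD : 0 < Un j ^ (p - 1) - W := by
      have := Real.rpow_le_rpow hM0.le hj hp1.le
      linarith
    have hτsj : 0 < τs j := by
      rw [hτs]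
      exact mul_pos hτ (lt_min one_pos (Real.rpow_pos_of_pos hUj _))
    positivity
  -- the uniform gap
  set M : ℝ := Un n with hMdef
  set c : ℝ := τ * min (M * (M ^ (p - 1) - W)) (M - W * M ^ (2 - p)) with hcdef
  have hMW : W * M ^ (1 - p) < 1 := by
    have h1 : M ^ (1 - p) = (M ^ (p - 1))⁻¹ := by
      rw [show (1 - p) = -(p - 1) by ring, Real.rpow_neg hM0.le]
    rw [h1, ← div_eq_mul_inv, div_lt_one (lt_trans hpos hn)]
    exact hn
  have hM2p : M ^ (2 - p) = M * M ^ (1 - p) := by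
    rw [show (2 - p) = 1 + (1 - p) by ring, Real.rpow_add hM0, Real.rpow_one]
  have hc0 : 0 < c := by
    rw [hcdef]
    apply mul_pos hτ
    apply lt_min
    · exact mul_pos hM0 (by linarith)
    · rw [hM2p]; nlinarith
  have hgap : ∀ j, Un n ≤ Un j → c ≤ τs j * Un j * (Un j ^ (p - 1) - W) := by
    intro j hj
    have hUj : 0 < Un j := lt_of_lt_of_le hM0 hj
    have hD : 0 < Un j ^ (p - 1) - W := by
      have := Real.rpow_le_rpow hM0.le hj hp1.le
      linarith
    have hDM : 0 ≤ M ^ (p - 1) - W := by linarith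
    have hrw : τs j * Un j * (Un j ^ (p - 1) - W)
        = τ * min (Un j * (Un j ^ (p - 1) - W))
            (Un j ^ (1 - p) * (Un j * (Un j ^ (p - 1) - W))) := by
      rw [hτs, mul_assoc, mul_assoc,
        min_mul_of_nonneg _ _ (mul_nonneg hUj.le hD.le), one_mul]
    rw [hrw, hcdef]
    apply mul_le_mul_of_nonneg_left _ hτ.le
    apply min_le_min
    · -- first branch
      apply mul_le_mul hj _ hDM (hUnn j)
      have := Real.rpow_le_rpow hM0.le hj hp1.le
      linarith
    · -- second branch
      have h1p : Un j ^ (1 - p) ≤ M ^ (1 - p) :=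
        Real.rpow_le_rpow_of_nonpos hM0 hj (by linarith)
      have hWU : W * Un j ^ (1 - p) ≤ W * M ^ (1 - p) :=
        mul_le_mul_of_nonneg_left h1p hpos.le
      have hU2p : Un j ^ (2 - p) = Un j * Un j ^ (1 - p) := by
        rw [show (2 - p) = 1 + (1 - p) by ring, Real.rpow_add hUj, Real.rpow_one]
      have hexp : Un j ^ (1 - p) * (Un j * (Un j ^ (p - 1) - W))
          = Un j * (1 - W * Un j ^ (1 - p)) := by
        have h2 : Un j ^ (1 - p) * Un j ^ (p - 1) = 1 := by
          rw [← Real.rpow_add hUj]; norm_num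
        nlinarith [h2]
      rw [hexp, hM2p]
      have : M * (1 - W * M ^ (1 - p)) ≤ Un j * (1 - W * Un j ^ (1 - p)) := by
        apply mul_le_mul hj (by linarith) (by linarith) (hUnn j)
      nlinarith [this]
  -- induction: linear growth
  have hind : ∀ k : ℕ, Un n + k * c ≤ Un (n + k) := by
    intro k
    induction k with
    | zero => simp
    | succ k ih =>
      have hkc : 0 ≤ (k : ℝ) * c := mul_nonneg (Nat.cast_nonneg k) hc0.le
      have hj : Un n ≤ Un (n + k) := by linarith
      have h1 := hstep (n + k) (lt_of_lt_of_le hM0 hj)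
      have h2 := hgap (n + k) hj
      push_cast
      have : Un (n + k) + c ≤ Un (n + k + 1) := by linarith
      calc Un n + ((k : ℝ) + 1) * c = (Un n + k * c) + c := by ring
        _ ≤ Un (n + k) + c := by linarith
        _ ≤ Un (n + k + 1) := this
  have hge : ∀ j, n ≤ j → Un n ≤ Un j := by
    intro j hj
    have := hind (j - n)
    rw [Nat.add_sub_cancel' hj] at this
    have hkc : 0 ≤ ((j - n : ℕ) : ℝ) * c := mul_nonneg (Nat.cast_nonneg _) hc0.le
    linarith
  constructor
  · intro j hj
    have h1 := hstep j (lt_of_lt_of_le hM0 (hge j hj))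
    have h2 := hinc j (hge j hj)
    exact ⟨h1, by linarith⟩
  · -- tendsto
    apply tendsto_atTop_mono' atTop
      (show ∀ᶠ j : ℕ in atTop, Un n + ((j : ℝ) - n) * c ≤ Un j by
        filter_upwards [eventually_ge_atTop n] with j hj
        have := hind (j - n)
        rw [Nat.add_sub_cancel' hj] at this
        have : Un n + ((j - n : ℕ) : ℝ) * c ≤ Un j := this
        rwa [Nat.cast_sub hj] at this)
    have h1 : Tendsto (fun j : ℕ => ((j : ℝ) - n)) atTop atTop := by
      simpa [sub_eq_add_neg] using tendsto_atTop_add_const_right atTop (-(n : ℝ))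
        (tendsto_natCast_atTop_atTop (R := ℝ))
    have h2 := h1.atTop_mul_const hc0
    exact tendsto_atTop_add_const_left _ _ h2
end

section
/- Under the hypotheses of the discrete blow-up lemma (assumptions (A1), (CFL), u ≥ 0 solving the scheme with ‖u(·,t_n)‖_∞^{p−1} > ‖ω(·,h)‖_{ℓ¹} for some n), the total time T_{h,τ} = Σ_{j=0}^∞ τ_j is finite and lim_{j→∞} (T_{h,τ} − t_j) ‖u(·,t_j)‖_∞^{p−1} = τ(1+τ)^{p−1} / ((1+τ)^{p−1} − 1). -/
open Real Filter

open Topology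

/-!
Write `V_j` for the sup norm of `u j` and `S = ∑ ω`. Since `-u S ≤ L_h u ≤ (V - u) S`, one step
of the scheme gives `V_j (1 - τ_j S) + τ_j V_j ^ p ≤ V_{j+1} ≤ V_j + τ_j V_j ^ p`. In the lower
bound the relative growth `τ_j (V_j ^ (p - 1) - S)` increases with `V_j`, so once
`V_n ^ (p - 1) > S` the sup norms grow geometrically. Eventually `τ_j = τ V_j ^ (1 - p)`, the two
bounds squeeze `V_{j+1} / V_j → 1 + τ`, and hence `τ_{j+1} / τ_j → (1 + τ) ^ (1 - p) < 1`. The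
tail of a series whose ratio tends to `r < 1` is asymptotic to `(1 - r)⁻¹` times its first term,
and `(T - t_j) V_j ^ (p - 1) = τ (∑_{k ≥ j} τ_k) / τ_j`.
-/

section TailRatio

variable {a : ℕ → ℝ} {ρ : ℝ}

theorem tsum_le_inv_one_sub_mul_of_succ_le (ha : ∀ k, 0 ≤ a k) (hρ₀ : 0 ≤ ρ) (hρ₁ : ρ < 1)
    (h : ∀ k, a (k + 1) ≤ ρ * a k) : ∑' k, a k ≤ (1 - ρ)⁻¹ * a 0 := by
  have hgeom : ∀ k, a k ≤ ρ ^ k * a 0 := fun k => le_geom hρ₀ k fun i _ => h i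
  have hsum := (summable_geometric_of_lt_one hρ₀ hρ₁).mul_right (a 0)
  calc ∑' k, a k ≤ ∑' k, ρ ^ k * a 0 :=
        (Summable.of_nonneg_of_le ha hgeom hsum).tsum_le_tsum hgeom hsum
    _ = (1 - ρ)⁻¹ * a 0 := by rw [tsum_mul_right, tsum_geometric_of_lt_one hρ₀ hρ₁]

theorem inv_one_sub_mul_le_tsum_of_le_succ (ha : Summable a) (hρ₀ : 0 ≤ ρ) (hρ₁ : ρ < 1)
    (h : ∀ k, ρ * a k ≤ a (k + 1)) : (1 - ρ)⁻¹ * a 0 ≤ ∑' k, a k := by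
  have hgeom : ∀ k, ρ ^ k * a 0 ≤ a k := fun k => geom_le hρ₀ k fun i _ => h i
  calc (1 - ρ)⁻¹ * a 0 = ∑' k, ρ ^ k * a 0 := by
        rw [tsum_mul_right, tsum_geometric_of_lt_one hρ₀ hρ₁]
    _ ≤ ∑' k, a k :=
        ((summable_geometric_of_lt_one hρ₀ hρ₁).mul_right (a 0)).tsum_le_tsum hgeom ha

theorem eventually_tsum_tail_div_le (ha : ∀ᶠ j in atTop, 0 < a j) (hρ₀ : 0 ≤ ρ)
    (hρ₁ : ρ < 1) (h : ∀ᶠ k in atTop, a (k + 1) ≤ ρ * a k) :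
    ∀ᶠ j in atTop, (∑' k, a (k + j)) / a j ≤ (1 - ρ)⁻¹ := by
  obtain ⟨J, hJ⟩ := (ha.and h).exists_forall_of_atTop
  filter_upwards [eventually_ge_atTop J] with j hj
  rw [div_le_iff₀ (hJ j hj).1]
  simpa using tsum_le_inv_one_sub_mul_of_succ_le (a := fun k => a (k + j))
    (fun k => (hJ (k + j) (by omega)).1.le) hρ₀ hρ₁
    fun k => by simpa [add_right_comm] using (hJ (k + j) (by omega)).2

theorem eventually_le_tsum_tail_div (hs : Summable a) (ha : ∀ᶠ j in atTop, 0 < a j)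
    (hρ₀ : 0 ≤ ρ) (hρ₁ : ρ < 1) (h : ∀ᶠ k in atTop, ρ * a k ≤ a (k + 1)) :
    ∀ᶠ j in atTop, (1 - ρ)⁻¹ ≤ (∑' k, a (k + j)) / a j := by
  obtain ⟨J, hJ⟩ := (ha.and h).exists_forall_of_atTop
  filter_upwards [eventually_ge_atTop J] with j hj
  rw [le_div_iff₀ (hJ j hj).1]
  simpa using inv_one_sub_mul_le_tsum_of_le_succ (a := fun k => a (k + j))
    ((summable_nat_add_iff j).mpr hs) hρ₀ hρ₁
    fun k => by simpa [add_right_comm] using (hJ (k + j) (by omega)).2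

theorem tendsto_tsum_tail_div_of_tendsto_ratio {r : ℝ} (hr : r < 1)
    (ha : ∀ᶠ j in atTop, 0 < a j) (h : Tendsto (fun j => a (j + 1) / a j) atTop (𝓝 r)) :
    Summable a ∧ Tendsto (fun j => (∑' k, a (k + j)) / a j) atTop (𝓝 (1 - r)⁻¹) := by
  have ha' : ∀ᶠ j in atTop, 0 < a j ∧ 0 < a (j + 1) :=
    ha.and ((tendsto_add_atTop_nat 1).eventually ha)
  have hs : Summable a := by
    refine summable_of_ratio_test_tendsto_lt_one hr (ha.mono fun j hj => hj.ne') (h.congr' ?_)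
    filter_upwards [ha'] with j hj
    rw [Real.norm_of_nonneg hj.1.le, Real.norm_of_nonneg hj.2.le]
  have hr₀ : 0 ≤ r := ge_of_tendsto h (ha'.mono fun j hj => (div_pos hj.2 hj.1).le)
  refine ⟨hs, tendsto_order.2 ⟨fun b hb => ?_, fun b hb => ?_⟩⟩
  · have hcont : ContinuousAt (fun x : ℝ => (1 - max x 0)⁻¹) r :=
      ContinuousAt.inv₀ (by fun_prop) (by rw [max_eq_left hr₀]; linarith)
    have hlim : Tendsto (fun x : ℝ => (1 - max x 0)⁻¹) (𝓝[<] r) (𝓝 (1 - max r 0)⁻¹) :=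
      hcont.tendsto.mono_left nhdsWithin_le_nhds
    rw [max_eq_left hr₀] at hlim
    -- `ρ < r` may be negative when `r = 0`; the ratio is then only bounded below by `0`.
    obtain ⟨ρ, hbρ, hρr⟩ := ((hlim.eventually (lt_mem_nhds hb)).and self_mem_nhdsWithin).exists
    refine (eventually_le_tsum_tail_div hs ha (le_max_right ρ 0)
      (max_lt (hρr.trans hr) (by norm_num)) ?_).mono fun j hj => hbρ.trans_le hj
    filter_upwards [ha'.and (h.eventually (lt_mem_nhds hρr))] with k ⟨⟨hk, hk1⟩, hρk⟩
    rcases le_total ρ 0 with hρ | hρ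
    · simpa [max_eq_right hρ] using hk1.le
    · rw [max_eq_left hρ]; exact ((lt_div_iff₀ hk).mp hρk).le
  · have hlim : Tendsto (fun x : ℝ => (1 - x)⁻¹) (𝓝[>] r) (𝓝 (1 - r)⁻¹) :=
      (ContinuousAt.inv₀ (by fun_prop) (by linarith)).tendsto.mono_left nhdsWithin_le_nhds
    obtain ⟨ρ, hρb, hρ1, hrρ⟩ := ((hlim.eventually (gt_mem_nhds hb)).and
      ((eventually_nhdsWithin_of_eventually_nhds (eventually_lt_nhds hr)).and
        self_mem_nhdsWithin)).exists
    refine (eventually_tsum_tail_div_le ha (hr₀.trans hrρ.le) hρ1 ?_).mono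
      fun j hj => hj.trans_lt hρb
    filter_upwards [ha, h.eventually (gt_mem_nhds hrρ)] with k hk hρk
    exact ((div_lt_iff₀ hk).mp hρk).le

end TailRatio

section DiscreteLh

variable {N : ℕ} {ω φ : (Fin N → ℤ) → ℝ} {M : ℝ}

theorem summable_discreteLh_summand (hω : ∀ β, 0 ≤ ω β) (hs : Summable ω)
    (hφ : ∀ α, 0 ≤ φ α) (hφM : ∀ α, φ α ≤ M) (α : Fin N → ℤ) :
    Summable fun β => (φ (α + β) - φ α) * ω β := by
  refine Summable.of_norm_bounded (hs.mul_left M) fun β => ?_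
  rw [norm_mul, Real.norm_of_nonneg (hω β)]
  have : |φ (α + β) - φ α| ≤ M := abs_sub_le_iff.2
    ⟨by linarith [hφM (α + β), hφ α], by linarith [hφM α, hφ (α + β)]⟩
  exact mul_le_mul_of_nonneg_right this (hω β)

theorem discreteLh_le (hω : ∀ β, 0 ≤ ω β) (hs : Summable ω)
    (hφ : ∀ α, 0 ≤ φ α) (hφM : ∀ α, φ α ≤ M) (α : Fin N → ℤ) :
    discreteLh ω φ α ≤ (M - φ α) * ∑' β, ω β := by
  rw [← tsum_mul_left]
  exact (summable_discreteLh_summand hω hs hφ hφM α).tsum_le_tsum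
    (fun β => mul_le_mul_of_nonneg_right (by linarith [hφM (α + β)]) (hω β)) (hs.mul_left _)

theorem neg_mul_tsum_le_discreteLh (hω : ∀ β, 0 ≤ ω β) (hs : Summable ω)
    (hφ : ∀ α, 0 ≤ φ α) (hφM : ∀ α, φ α ≤ M) (α : Fin N → ℤ) :
    -(φ α * ∑' β, ω β) ≤ discreteLh ω φ α := by
  rw [← tsum_mul_left, ← tsum_neg]
  exact (hs.mul_left _).neg.tsum_le_tsum
    (fun β => by nlinarith [hφ (α + β), hω β]) (summable_discreteLh_summand hω hs hφ hφM α)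

end DiscreteLh

noncomputable def eulerStep {N : ℕ} (ω : (Fin N → ℤ) → ℝ) (p s : ℝ) (φ : (Fin N → ℤ) → ℝ)
    (α : Fin N → ℤ) : ℝ :=
  φ α + s * (discreteLh ω φ α + φ α ^ p)

section EulerStep

variable {N : ℕ} {ω φ : (Fin N → ℤ) → ℝ} {p s M : ℝ}

theorem eulerStep_le (hω : ∀ β, 0 ≤ ω β) (hs : Summable ω) (hp : 0 ≤ p)
    (hφ : ∀ α, 0 ≤ φ α) (hφM : ∀ α, φ α ≤ M) (hs₀ : 0 ≤ s) (hCFL : s * ∑' β, ω β ≤ 1)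
    (α : Fin N → ℤ) : eulerStep ω p s φ α ≤ M + s * M ^ p := by
  have hL := discreteLh_le hω hs hφ hφM α
  have hpow : φ α ^ p ≤ M ^ p := Real.rpow_le_rpow (hφ α) (hφM α) hp
  have hMφ : 0 ≤ (M - φ α) * (1 - s * ∑' β, ω β) :=
    mul_nonneg (by linarith [hφM α]) (by linarith)
  unfold eulerStep
  nlinarith [mul_le_mul_of_nonneg_left (add_le_add hL hpow) hs₀]

theorem le_eulerStep (hω : ∀ β, 0 ≤ ω β) (hs : Summable ω)
    (hφ : ∀ α, 0 ≤ φ α) (hφM : ∀ α, φ α ≤ M) (hs₀ : 0 ≤ s) (α : Fin N → ℤ) :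
    φ α * (1 - s * ∑' β, ω β) + s * φ α ^ p ≤ eulerStep ω p s φ α := by
  have hL := neg_mul_tsum_le_discreteLh hω hs hφ hφM α
  unfold eulerStep
  nlinarith [mul_le_mul_of_nonneg_left hL hs₀]

theorem iSup_eulerStep_le (hω : ∀ β, 0 ≤ ω β) (hs : Summable ω) (hp : 0 ≤ p)
    (hφ : ∀ α, 0 ≤ φ α) (hφb : BddAbove (Set.range φ)) (hs₀ : 0 ≤ s)
    (hCFL : s * ∑' β, ω β ≤ 1) :
    ⨆ α, eulerStep ω p s φ α ≤ (⨆ α, φ α) + s * (⨆ α, φ α) ^ p :=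
  ciSup_le (eulerStep_le hω hs hp hφ (le_ciSup hφb) hs₀ hCFL)

theorem le_iSup_eulerStep (hω : ∀ β, 0 ≤ ω β) (hs : Summable ω) (hp : 0 ≤ p)
    (hφ : ∀ α, 0 ≤ φ α) (hφb : BddAbove (Set.range φ)) (hs₀ : 0 ≤ s)
    (hCFL : s * ∑' β, ω β ≤ 1) :
    (⨆ α, φ α) * (1 - s * ∑' β, ω β) + s * (⨆ α, φ α) ^ p ≤ ⨆ α, eulerStep ω p s φ α := by
  set g : ℝ → ℝ := fun x => x * (1 - s * ∑' β, ω β) + s * max x 0 ^ p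
  have hg : Monotone g := fun x y hxy => by
    have := Real.rpow_le_rpow (le_max_right x 0) (max_le_max_right 0 hxy) hp
    dsimp only [g]
    nlinarith
  have hgc : ContinuousAt g (⨆ α, φ α) := by
    have := Real.continuousAt_rpow_const (max (⨆ α, φ α) 0) p (Or.inr hp)
    dsimp only [g]
    fun_prop
  have hsup : 0 ≤ ⨆ α, φ α := (hφ 0).trans (le_ciSup hφb 0)
  have hbdd : BddAbove (Set.range (eulerStep ω p s φ)) :=
    ⟨_, Set.forall_mem_range.2 (eulerStep_le hω hs hp hφ (le_ciSup hφb) hs₀ hCFL)⟩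
  calc (⨆ α, φ α) * (1 - s * ∑' β, ω β) + s * (⨆ α, φ α) ^ p = g (⨆ α, φ α) := by
        simp only [g, max_eq_left hsup]
    _ = ⨆ α, g (φ α) := hg.map_ciSup_of_continuousAt hgc hφb
    _ ≤ ⨆ α, eulerStep ω p s φ α := ciSup_mono hbdd fun α => by
        simpa only [g, max_eq_left (hφ α)] using le_eulerStep hω hs hφ (le_ciSup hφb) hs₀ α

end EulerStep

theorem min_one_inv_mul_sub_le {S A x : ℝ} (hS : 0 ≤ S) (hSA : S < A) (hAx : A ≤ x) :
    min 1 A⁻¹ * (A - S) ≤ min 1 x⁻¹ * (x - S) := by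
  have hA : 0 < A := hS.trans_lt hSA
  rw [min_mul_of_nonneg _ _ (by linarith), min_mul_of_nonneg _ _ (by linarith),
    one_mul, one_mul, mul_sub A⁻¹, mul_sub x⁻¹, inv_mul_cancel₀ hA.ne',
    inv_mul_cancel₀ (hA.trans_le hAx).ne']
  gcongr

section SupNormRecursion

variable {p τ S : ℝ} {V τs : ℕ → ℝ}

theorem tendsto_atTop_of_lt_rpow (hp : 1 < p) (hτ : 0 < τ) (hS : 0 ≤ S) (hV : ∀ j, 0 ≤ V j)
    (hτs : ∀ j, τs j = τ * min 1 (V j ^ (1 - p)))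
    (hlow : ∀ j, V j * (1 - τs j * S) + τs j * V j ^ p ≤ V (j + 1))
    {n : ℕ} (hn : S < V n ^ (p - 1)) : Tendsto V atTop atTop := by
  have hgrowth : ∀ j,
      V j * (1 + τ * (min 1 (V j ^ (p - 1))⁻¹ * (V j ^ (p - 1) - S))) ≤ V (j + 1) := by
    intro j
    have hinv : V j ^ (1 - p) = (V j ^ (p - 1))⁻¹ := by rw [← Real.rpow_neg (hV j), neg_sub]
    have hpow : V j ^ p = V j ^ (p - 1) * V j := by
      rw [← Real.rpow_add_one' (hV j) (by linarith), sub_add_cancel]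
    convert hlow j using 1
    rw [hτs j, hinv, hpow]; ring
  set A := V n ^ (p - 1)
  set c := τ * (min 1 A⁻¹ * (A - S))
  have hA : 0 < A := hS.trans_lt hn
  have hc : 0 < c := mul_pos hτ (mul_pos (lt_min one_pos (inv_pos.2 hA)) (sub_pos.2 hn))
  have hVn : 0 < V n := by
    refine (hV n).lt_of_ne fun h => hA.ne' ?_
    simp only [A, ← h, Real.zero_rpow (by linarith : p - 1 ≠ 0)]
  have hstep : ∀ k, V n ≤ V k → (1 + c) * V k ≤ V (k + 1) := by
    intro k hk
    have hAk : A ≤ V k ^ (p - 1) := Real.rpow_le_rpow (hV n) hk (by linarith)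
    have hrate := mul_le_mul_of_nonneg_left (min_one_inv_mul_sub_le hS hn hAk) hτ.le
    nlinarith [hgrowth k, hV k]
  have hmono : ∀ m, V n ≤ V (m + n) := by
    intro m
    induction m with
    | zero => simp
    | succ m ih =>
      rw [add_right_comm]
      nlinarith [hstep _ ih]
  rw [← tendsto_add_atTop_iff_nat n]
  exact tendsto_atTop_of_geom_le (by simpa using hVn) (by linarith : 1 < 1 + c) fun m => by
    simpa [add_right_comm] using hstep _ (hmono m)

theorem eventually_eq_mul_rpow_of_tendsto_atTop (hp : 1 < p)
    (hτs : ∀ j, τs j = τ * min 1 (V j ^ (1 - p))) (hV : Tendsto V atTop atTop) :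
    ∀ᶠ j in atTop, 1 ≤ V j ∧ τs j = τ * V j ^ (1 - p) := by
  filter_upwards [hV.eventually_ge_atTop 1] with j hj
  rw [hτs j, min_eq_right (Real.rpow_le_one_of_one_le_of_nonpos hj (by linarith))]
  exact ⟨hj, rfl⟩

theorem tendsto_succ_div_of_tendsto_atTop (hp : 1 < p)
    (hτs : ∀ j, τs j = τ * min 1 (V j ^ (1 - p)))
    (hlow : ∀ j, V j * (1 - τs j * S) + τs j * V j ^ p ≤ V (j + 1))
    (hup : ∀ j, V (j + 1) ≤ V j + τs j * V j ^ p) (hV : Tendsto V atTop atTop) :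
    Tendsto (fun j => V (j + 1) / V j) atTop (𝓝 (1 + τ)) := by
  have hdecay : Tendsto (fun j => V j ^ (1 - p)) atTop (𝓝 0) := by
    have := (tendsto_rpow_neg_atTop (by linarith : 0 < p - 1)).comp hV
    rwa [neg_sub] at this
  have hlower : Tendsto (fun j => 1 + τ - τ * S * V j ^ (1 - p)) atTop (𝓝 (1 + τ)) := by
    simpa using tendsto_const_nhds.sub (hdecay.const_mul (τ * S))
  have hbounds : ∀ᶠ j in atTop,
      1 + τ - τ * S * V j ^ (1 - p) ≤ V (j + 1) / V j ∧ V (j + 1) / V j ≤ 1 + τ := by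
    filter_upwards [eventually_eq_mul_rpow_of_tendsto_atTop hp hτs hV] with j ⟨hVj, hτj⟩
    have hVj₀ : 0 < V j := by linarith
    have hpow : τs j * V j ^ p = τ * V j := by
      rw [hτj, mul_assoc, ← Real.rpow_add hVj₀, sub_add_cancel, Real.rpow_one]
    have hlowj := hlow j
    rw [hpow, hτj] at hlowj
    rw [le_div_iff₀ hVj₀, div_le_iff₀ hVj₀]
    constructor <;> linarith [hup j]
  exact tendsto_of_tendsto_of_tendsto_of_le_of_le' hlower tendsto_const_nhds
    (hbounds.mono fun _ h => h.1) (hbounds.mono fun _ h => h.2)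

theorem summable_and_tendsto_tsum_tail_mul_rpow (hp : 1 < p) (hτ : 0 < τ) (hS : 0 ≤ S)
    (hV : ∀ j, 0 ≤ V j) (hτs : ∀ j, τs j = τ * min 1 (V j ^ (1 - p)))
    (hlow : ∀ j, V j * (1 - τs j * S) + τs j * V j ^ p ≤ V (j + 1))
    (hup : ∀ j, V (j + 1) ≤ V j + τs j * V j ^ p) {n : ℕ} (hn : S < V n ^ (p - 1)) :
    Summable τs ∧ Tendsto (fun j => (∑' k, τs (k + j)) * V j ^ (p - 1)) atTop
      (𝓝 (τ * (1 + τ) ^ (p - 1) / ((1 + τ) ^ (p - 1) - 1))) := by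
  have hVtop := tendsto_atTop_of_lt_rpow hp hτ hS hV hτs hlow hn
  have hev := eventually_eq_mul_rpow_of_tendsto_atTop hp hτs hVtop
  have hpos : ∀ᶠ j in atTop, 0 < τs j := hev.mono fun j ⟨hVj, hτj⟩ => by
    rw [hτj]; exact mul_pos hτ (Real.rpow_pos_of_pos (by linarith) _)
  have hratio : Tendsto (fun j => τs (j + 1) / τs j) atTop (𝓝 ((1 + τ) ^ (1 - p))) := by
    refine ((tendsto_succ_div_of_tendsto_atTop hp hτs hlow hup hVtop).rpow_const
      (Or.inl (by linarith))).congr' ?_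
    filter_upwards [hev, (tendsto_add_atTop_nat 1).eventually hev]
      with j ⟨hVj, hτj⟩ ⟨hVj', hτj'⟩
    rw [hτj, hτj', Real.div_rpow (by linarith) (by linarith), mul_div_mul_left _ _ hτ.ne']
  have hQ : 1 < (1 + τ) ^ (p - 1) := Real.one_lt_rpow (by linarith) (by linarith)
  have hr : (1 + τ) ^ (1 - p) = ((1 + τ) ^ (p - 1))⁻¹ := by
    rw [← Real.rpow_neg (by linarith), neg_sub]
  obtain ⟨hsum, htail⟩ := tendsto_tsum_tail_div_of_tendsto_ratio
    (by rw [hr]; exact inv_lt_one_of_one_lt₀ hQ) hpos hratio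
  have hlim :
      τ * (1 - (1 + τ) ^ (1 - p))⁻¹ = τ * (1 + τ) ^ (p - 1) / ((1 + τ) ^ (p - 1) - 1) := by
    rw [hr]; field_simp
  refine ⟨hsum, hlim ▸ (htail.const_mul τ).congr' ?_⟩
  filter_upwards [hev] with j ⟨hVj, hτj⟩
  have hinv : V j ^ (1 - p) * V j ^ (p - 1) = 1 := by
    rw [← Real.rpow_add (by linarith), sub_add_sub_cancel', sub_self, Real.rpow_zero]
  rw [hτj]
  field_simp
  rw [mul_assoc, hinv, mul_one]

end SupNormRecursion

theorem stmt12_general (N : ℕ) (p τ : ℝ) (hp : 1 < p) (hτ : 0 < τ)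
    (ω : (Fin N → ℤ) → ℝ)
    (hnonneg : ∀ α, 0 ≤ ω α)
    (hsum : Summable ω)
    (hCFL : τ ≤ 1 / (4 * ∑' α, ω α))
    (u : ℕ → (Fin N → ℤ) → ℝ) (hu : ∀ j α, 0 ≤ u j α)
    (hbdd : ∀ j, BddAbove (Set.range (u j)))
    (Un : ℕ → ℝ) (hUn : ∀ j, Un j = ⨆ α, u j α)
    (τs : ℕ → ℝ) (hτs : ∀ j, τs j = τ * min 1 (Un j ^ (1 - p)))
    (hscheme : ∀ j α, u (j + 1) α = u j α + τs j * (discreteLh ω (u j) α + u j α ^ p))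
    (t : ℕ → ℝ) (ht : ∀ j, t j = ∑ k ∈ Finset.range j, τs k)
    (n : ℕ) (hn : (∑' α, ω α) < Un n ^ (p - 1)) :
    Summable τs ∧
    Tendsto (fun j => ((∑' k, τs k) - t j) * Un j ^ (p - 1)) atTop
      (nhds (τ * (1 + τ) ^ (p - 1) / ((1 + τ) ^ (p - 1) - 1))) := by
  have hS : 0 ≤ ∑' α, ω α := tsum_nonneg hnonneg
  have hV : ∀ j, 0 ≤ Un j := fun j => hUn j ▸ (hu j 0).trans (le_ciSup (hbdd j) 0)
  have hτs₀ : ∀ j, 0 ≤ τs j := fun j => hτs j ▸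
    mul_nonneg hτ.le (le_min zero_le_one (Real.rpow_nonneg (hV j) _))
  have hτS : τ * ∑' α, ω α ≤ 1 := by
    rcases hS.eq_or_lt with h | h
    · rw [← h, mul_zero]; exact zero_le_one
    · rw [le_div_iff₀ (by positivity)] at hCFL; linarith
  have hτsS : ∀ j, τs j * ∑' α, ω α ≤ 1 := fun j => by
    refine le_trans (mul_le_mul_of_nonneg_right ?_ hS) hτS
    rw [hτs j]; exact mul_le_of_le_one_right hτ.le (min_le_left _ _)
  have hUn_succ : ∀ j, Un (j + 1) = ⨆ α, eulerStep ω p (τs j) (u j) α := fun j => by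
    simp only [hUn, hscheme, eulerStep]
  obtain ⟨hτsum, hlim⟩ := summable_and_tendsto_tsum_tail_mul_rpow hp hτ hS hV hτs
    (fun j => hUn j ▸ hUn_succ j ▸ le_iSup_eulerStep hnonneg hsum (by linarith) (hu j) (hbdd j)
      (hτs₀ j) (hτsS j))
    (fun j => hUn j ▸ hUn_succ j ▸ iSup_eulerStep_le hnonneg hsum (by linarith) (hu j) (hbdd j)
      (hτs₀ j) (hτsS j)) hn
  refine ⟨hτsum, hlim.congr fun j => ?_⟩
  rw [ht j, ← hτsum.sum_add_tsum_nat_add j, add_sub_cancel_left]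

/-- Under (A1), (CFL) and the blow-up condition `‖u(·,tₙ)‖_∞^{p-1} > ‖ω‖_{ℓ¹}`, the total
time `T_{h,τ} = Σⱼ τⱼ` is finite and
`(T_{h,τ} - tⱼ)‖u(·,tⱼ)‖_∞^{p-1} → τ(1+τ)^{p-1}/((1+τ)^{p-1} - 1)`. -/
theorem stmt12 (N : ℕ) (p τ : ℝ) (hp : 1 < p) (hτ : 0 < τ)
    (ω : (Fin N → ℤ) → ℝ)
    (hsym : ∀ α, ω (-α) = ω α) (hnonneg : ∀ α, 0 ≤ ω α) (hω0 : ω 0 = 0)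
    (hsum : Summable ω) (hpos : 0 < ∑' α, ω α)
    (hCFL : τ ≤ 1 / (4 * ∑' α, ω α))
    (u : ℕ → (Fin N → ℤ) → ℝ) (hu : ∀ j α, 0 ≤ u j α)
    (hbdd : ∀ j, BddAbove (Set.range (u j)))
    (Un : ℕ → ℝ) (hUn : ∀ j, Un j = ⨆ α, u j α)
    (τs : ℕ → ℝ) (hτs : ∀ j, τs j = τ * min 1 (Un j ^ (1 - p)))
    (hscheme : ∀ j α, u (j + 1) α = u j α + τs j * (discreteLh ω (u j) α + u j α ^ p))
    (t : ℕ → ℝ) (ht : ∀ j, t j = ∑ k ∈ Finset.range j, τs k)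
    (n : ℕ) (hn : (∑' α, ω α) < Un n ^ (p - 1)) :
    Summable τs ∧
    Tendsto (fun j => ((∑' k, τs k) - t j) * Un j ^ (p - 1)) atTop
      (nhds (τ * (1 + τ) ^ (p - 1) / ((1 + τ) ^ (p - 1) - 1))) :=
  stmt12_general N p τ hp hτ ω hnonneg hsum hCFL u hu hbdd Un hUn τs hτs hscheme t ht n hn
end

section
/- Let I : ℕ → ℝ satisfy I(t_{j+1}) = I(t_j) + τ_j D_j with D_j ≥ I(t_j)(I(t_j)^{p−1} − λ), where p > 1, λ > 0, I(0)^{p−1} > λ, and τ_j ≥ c > 0 for all j whenever I stays bounded. Then I cannot be both increasing and bounded; i.e., the assumption that I(t_j) ≤ K for all j leads to a contradiction, so I(t_j) is unbounded. -/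
open Real

/-- The discrete Kaplan-type differential inequality: a sequence with
`I(j+1) = I(j) + τⱼ Dⱼ`, `Dⱼ ≥ I(j)(I(j)^{p-1} - λ)`, `I(0)^{p-1} > λ > 0`, whose time
steps are bounded below by `c > 0` as long as `I` stays bounded, cannot be bounded. -/
theorem stmt15 (p lam c : ℝ) (hp : 1 < p) (hlam : 0 < lam) (hc : 0 < c)
    (I D τs : ℕ → ℝ)
    (hI0 : 0 < I 0) (hinit : lam < I 0 ^ (p - 1))
    (hD : ∀ j, I j * (I j ^ (p - 1) - lam) ≤ D j)
    (hrec : ∀ j, I (j + 1) = I j + τs j * D j)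
    (hτ : ∀ K : ℝ, (∀ j, I j ≤ K) → ∀ j, c ≤ τs j) :
    ¬ BddAbove (Set.range I) := by
  rintro ⟨K, hK⟩
  have hKb : ∀ j, I j ≤ K := fun j => hK (Set.mem_range_self j)
  have hτc := hτ K hKb
  set δ := I 0 ^ (p - 1) - lam with hδ
  have hδ0 : 0 < δ := by simp [hδ]; linarith
  set ε := c * (I 0 * δ) with hε
  have hε0 : 0 < ε := by positivity
  have key : ∀ j : ℕ, I 0 + j * ε ≤ I j := by
    intro j
    induction j with
    | zero => simp
    | succ n ih =>
      have hn0 : (0:ℝ) ≤ (n:ℝ) := Nat.cast_nonneg n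
      have hIn : I 0 ≤ I n := by nlinarith
      have hpow : I 0 ^ (p - 1) ≤ I n ^ (p - 1) :=
        Real.rpow_le_rpow hI0.le hIn (by linarith)
      have hfac : δ ≤ I n ^ (p - 1) - lam := by simp [hδ]; linarith
      have hDn : I 0 * δ ≤ D n := by
        have := mul_le_mul hIn hfac hδ0.le (by linarith)
        linarith [hD n]
      have hstep : ε ≤ τs n * D n := by
        have := mul_le_mul (hτc n) hDn (by positivity) (le_trans hc.le (hτc n))
        simpa [hε] using this
      have := hrec n
      push_cast
      linarith
  obtain ⟨j, hj⟩ := exists_nat_gt ((K - I 0) / ε)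
  have : K - I 0 < j * ε := by
    rw [div_lt_iff₀ hε0] at hj; linarith
  linarith [key j, hKb j]
end

section
/- Let p > 1 and g(τ) = τ(1+τ)^{p−1} / ((1+τ)^{p−1} − 1) for τ > 0. Then g is increasing on (0,1], lim_{τ→0⁺} g(τ) = 1/(p−1), and g(1) = 2^{p−1}/(2^{p−1}−1); hence 1/(p−1) ≤ g(τ) ≤ 2^{p−1}/(2^{p−1}−1) for τ ∈ (0,1]. -/
open Real Set Filter Topology

/-- The function `g(τ) = τ(1+τ)^{p-1}/((1+τ)^{p-1} - 1)` is increasing on `(0,1]`, tends to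
`1/(p-1)` as `τ → 0⁺`, takes the value `2^{p-1}/(2^{p-1}-1)` at `τ = 1`; hence
`1/(p-1) ≤ g(τ) ≤ 2^{p-1}/(2^{p-1}-1)` for `τ ∈ (0,1]`. -/
theorem stmt18 (p : ℝ) (hp : 1 < p) (g : ℝ → ℝ)
    (hg : ∀ τ, g τ = τ * (1 + τ) ^ (p - 1) / ((1 + τ) ^ (p - 1) - 1)) :
    StrictMonoOn g (Ioc (0 : ℝ) 1) ∧
    Tendsto g (nhdsWithin 0 (Ioi (0 : ℝ))) (nhds (1 / (p - 1))) ∧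
    g 1 = (2 : ℝ) ^ (p - 1) / ((2 : ℝ) ^ (p - 1) - 1) ∧
    ∀ τ ∈ Ioc (0 : ℝ) 1,
      1 / (p - 1) ≤ g τ ∧ g τ ≤ (2 : ℝ) ^ (p - 1) / ((2 : ℝ) ^ (p - 1) - 1) := by
  obtain rfl : g = fun τ : ℝ => τ * (1 + τ) ^ (p - 1) / ((1 + τ) ^ (p - 1) - 1) := funext hg
  have hs0 : 0 < p - 1 := by linarith
  have hA : ∀ τ : ℝ, 0 < τ → 1 < (1 + τ) ^ (p - 1) := by
    intro τ hτ
    rw [Real.one_lt_rpow_iff_of_pos (by linarith)]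
    exact Or.inl ⟨by linarith, hs0⟩
  have hAd : ∀ τ : ℝ, -1 < τ →
      HasDerivAt (fun x : ℝ => (1 + x) ^ (p - 1)) (1 * (p - 1) * (1 + τ) ^ (p - 1 - 1)) τ := by
    intro τ hτ
    have h0 : HasDerivAt (fun x : ℝ => 1 + x) 1 τ := (hasDerivAt_id τ).const_add 1
    exact h0.rpow_const (Or.inl (by intro h; linarith))
  have hGd : ∀ τ : ℝ, 0 < τ →
      HasDerivAt (fun x : ℝ => x * (1 + x) ^ (p - 1) / ((1 + x) ^ (p - 1) - 1))
      (((1 * (1 + τ) ^ (p - 1) + τ * (1 * (p - 1) * (1 + τ) ^ (p - 1 - 1)))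
          * ((1 + τ) ^ (p - 1) - 1)
        - τ * (1 + τ) ^ (p - 1) * (1 * (p - 1) * (1 + τ) ^ (p - 1 - 1)))
        / ((1 + τ) ^ (p - 1) - 1) ^ 2) τ := by
    intro τ hτ
    have h1 := hAd τ (by linarith)
    have hne : (1 + τ) ^ (p - 1) - 1 ≠ 0 := sub_ne_zero.2 (hA τ hτ).ne'
    exact ((hasDerivAt_id τ).mul h1).div (h1.sub_const 1) hne
  have hpos : ∀ τ : ℝ, 0 < τ →
      0 < ((1 * (1 + τ) ^ (p - 1) + τ * (1 * (p - 1) * (1 + τ) ^ (p - 1 - 1)))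
          * ((1 + τ) ^ (p - 1) - 1)
        - τ * (1 + τ) ^ (p - 1) * (1 * (p - 1) * (1 + τ) ^ (p - 1 - 1)))
        / ((1 + τ) ^ (p - 1) - 1) ^ 2 := by
    intro τ hτ
    have hx0 : (0 : ℝ) < 1 + τ := by linarith
    set A := (1 + τ) ^ (p - 1) with hAdef
    set B := (1 + τ) ^ (p - 1 - 1) with hBdef
    have hA1 : 1 < A := hA τ hτ
    have hB : 0 < B := Real.rpow_pos_of_pos hx0 _
    have hAB : A = B * (1 + τ) := by
      rw [hAdef, hBdef, ← Real.rpow_add_one hx0.ne']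
      congr 1
      ring
    have hAA : A * A = B * (1 + τ) ^ p := by
      rw [hAdef, hBdef, ← Real.rpow_add hx0, ← Real.rpow_add hx0]
      congr 1
      ring
    have hBern : 1 + p * τ < (1 + τ) ^ p :=
      one_add_mul_self_lt_rpow_one_add (by linarith) hτ.ne' hp
    have key : 0 < B * ((1 + τ) ^ p - (1 + p * τ)) := mul_pos hB (by linarith)
    apply div_pos _ (pow_pos (by linarith) 2)
    nlinarith [key, hAB, hAA]
  have hmono : StrictMonoOn
      (fun τ : ℝ => τ * (1 + τ) ^ (p - 1) / ((1 + τ) ^ (p - 1) - 1)) (Ioc (0 : ℝ) 1) := by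
    apply strictMonoOn_of_deriv_pos (convex_Ioc 0 1)
    · intro x hx
      exact ((hGd x hx.1).continuousAt).continuousWithinAt
    · intro x hx
      rw [interior_Ioc] at hx
      rw [(hGd x hx.1).deriv]
      exact hpos x hx.1
  have hF0 : HasDerivAt (fun τ : ℝ => (1 + τ) ^ (p - 1)) (p - 1) 0 := by
    have := hAd 0 (by norm_num)
    simpa using this
  have hslope : Tendsto (fun τ : ℝ => ((1 + τ) ^ (p - 1) - 1) / τ)
      (𝓝[>] (0 : ℝ)) (𝓝 (p - 1)) := by
    have h1 := hasDerivAt_iff_tendsto_slope.mp hF0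
    have h2 : Tendsto (slope (fun τ : ℝ => (1 + τ) ^ (p - 1)) 0)
        (𝓝[>] (0 : ℝ)) (𝓝 (p - 1)) :=
      h1.mono_left (nhdsWithin_mono _ fun x hx => ne_of_gt hx)
    refine h2.congr fun τ => ?_
    simp [slope_def_field]
  have hinv : Tendsto (fun τ : ℝ => τ / ((1 + τ) ^ (p - 1) - 1))
      (𝓝[>] (0 : ℝ)) (𝓝 (p - 1)⁻¹) := by
    have h1 := hslope.inv₀ hs0.ne'
    refine h1.congr fun τ => ?_
    rw [inv_div]
  have hcont : Tendsto (fun τ : ℝ => (1 + τ) ^ (p - 1)) (𝓝[>] (0 : ℝ)) (𝓝 1) := by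
    have h1 := hF0.continuousAt.tendsto
    have h2 := h1.mono_left (nhdsWithin_le_nhds (s := Ioi (0 : ℝ)))
    simpa using h2
  have hlim : Tendsto (fun τ : ℝ => τ * (1 + τ) ^ (p - 1) / ((1 + τ) ^ (p - 1) - 1))
      (𝓝[>] (0 : ℝ)) (𝓝 (1 / (p - 1))) := by
    have h1 := hcont.mul hinv
    rw [one_mul] at h1
    rw [one_div]
    refine Tendsto.congr (fun τ => ?_) h1
    ring
  have hg1 : (fun τ : ℝ => τ * (1 + τ) ^ (p - 1) / ((1 + τ) ^ (p - 1) - 1)) 1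
      = (2 : ℝ) ^ (p - 1) / ((2 : ℝ) ^ (p - 1) - 1) := by
    norm_num
  refine ⟨hmono, hlim, hg1, fun τ hτ => ⟨?_, ?_⟩⟩
  · refine le_of_tendsto hlim ?_
    filter_upwards [Ioo_mem_nhdsGT_of_mem ⟨le_refl (0 : ℝ), hτ.1⟩] with σ hσ
    exact (hmono ⟨hσ.1, hσ.2.le.trans hτ.2⟩ hτ hσ.2).le
  · rw [← hg1]
    rcases eq_or_lt_of_le hτ.2 with h | h
    · rw [h]
    · exact (hmono hτ (right_mem_Ioc.2 one_pos) h).le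
end
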